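/- If f is an injective geometric homomorphism between geometric realizations G-bar and G-hat of the same graph G, then the convex clique number satisfies ω̂(G-bar) ≤ ω̂(G-hat), where ω̂ denotes the maximum size of a set of pairwise-adjacent vertices in convex position. -/
import Mathlib


noncomputable section

/-- A point of the plane. -/
abbrev Pt : Type := ℝ × ℝ

/-- Two straight segments cross: they meet at a point interior to both. -/
def SegCross (p q r s : Pt) : Prop :=
  (openSegment ℝ p q ∩ openSegment ℝ r s).Nonempty

/-- Points in general position: distinct, and no three collinear. -/
def GenPos {V : Type*} (pos : V → Pt) : Prop :=
  Function.Injective pos ∧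
    ∀ a b c : V, a ≠ b → b ≠ c → a ≠ c →
      ¬ Collinear ℝ ({pos a, pos b, pos c} : Set Pt)

/-- A geometric realization of an abstract graph `G`: a straight-line drawing on
points in general position. -/
structure GeomRealization {V : Type*} (G : SimpleGraph V) where
  pos : V → Pt
  genpos : GenPos pos

variable {V : Type*} {G : SimpleGraph V}

/-- Edges `e` and `f` of the realization `R` cross. -/
def GeomRealization.Crosses (R : GeomRealization G) (e f : Sym2 V) : Prop :=
  e ≠ f ∧ ∃ u v x y : V, e = s(u, v) ∧ f = s(x, y) ∧
    SegCross (R.pos u) (R.pos v) (R.pos x) (R.pos y)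

/-- An injective geometric homomorphism between two geometric realizations of the
same abstract graph `G`: an injective vertex map preserving adjacency and
crossings. -/
structure GeomHom (R S : GeomRealization G) where
  toFun : V → V
  inj : Function.Injective toFun
  adj : ∀ u v : V, G.Adj u v → G.Adj (toFun u) (toFun v)
  cross : ∀ u v x y : V, G.Adj u v → G.Adj x y →
    SegCross (R.pos u) (R.pos v) (R.pos x) (R.pos y) →
    SegCross (S.pos (toFun u)) (S.pos (toFun v)) (S.pos (toFun x)) (S.pos (toFun y))

/-- The total number of crossings of a realization: the number of unordered pairs of
edges of `G` that cross. -/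
def GeomRealization.crNum (R : GeomRealization G) : ℕ :=
  Set.ncard {q : Sym2 (Sym2 V) | ∃ e f : Sym2 V, q = s(e, f) ∧
    e ∈ G.edgeSet ∧ f ∈ G.edgeSet ∧ R.Crosses e f}

/-- `cr(e)`: the number of edges of `G` crossing the edge `e` in `R`. -/
def GeomRealization.crEdge (R : GeomRealization G) (e : Sym2 V) : ℕ :=
  Set.ncard {f : Sym2 V | f ∈ G.edgeSet ∧ R.Crosses e f}

/-- The edge `e` is uncrossed in `R`. -/
def GeomRealization.Uncrossed (R : GeomRealization G) (e : Sym2 V) : Prop :=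
  ∀ f ∈ G.edgeSet, ¬ R.Crosses e f

/-- The convex clique number `ω̂(R)`: the maximum size of a set of pairwise-adjacent
vertices whose points are in convex position. -/
def GeomRealization.convexCliqueNum [DecidableEq V] (R : GeomRealization G) : ℕ :=
  sSup {c : ℕ | ∃ t : Finset V, t.card = c ∧
    (∀ u ∈ t, ∀ w ∈ t, u ≠ w → G.Adj u w) ∧
    ConvexIndependent ℝ (fun x : {y // y ∈ t} => R.pos x.1)}


section AuxiliaryLemmas

lemma vec4_injective {α : Type*} {a b c d : α} (hab : a ≠ b) (hac : a ≠ c) (had : a ≠ d)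
    (hbc : b ≠ c) (hbd : b ≠ d) (hcd : c ≠ d) : Function.Injective ![a, b, c, d] := by
  intro m n h
  fin_cases m <;> fin_cases n <;> simp_all

lemma vec4_mem {α : Type*} [DecidableEq α] {a b c d : α} {t : Finset α} (ha : a ∈ t)
    (hb : b ∈ t) (hc : c ∈ t) (hd : d ∈ t) : ∀ m : Fin 4, ![a, b, c, d] m ∈ t := by
  intro m
  fin_cases m <;> assumption

lemma fin4_mem : ∀ i j k l x : Fin 4, ({i, j, k, l} : Finset (Fin 4)) = Finset.univ →
    x = i ∨ x = j ∨ x = k ∨ x = l := by decide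

lemma fin4_distinct : ∀ i j k l : Fin 4, ({i, j, k, l} : Finset (Fin 4)) = Finset.univ →
    i ≠ j ∧ i ≠ k ∧ i ≠ l ∧ j ≠ k ∧ j ≠ l ∧ k ≠ l := by decide

lemma fin4_compl₁ : ∀ i j k l x : Fin 4, ({i, j, k, l} : Finset (Fin 4)) = Finset.univ →
    (x ≠ i ↔ (x = j ∨ x = k ∨ x = l)) := by decide

lemma fin4_compl₂ : ∀ i j k l x : Fin 4, ({i, j, k, l} : Finset (Fin 4)) = Finset.univ →
    (x ≠ j ↔ (x = i ∨ x = k ∨ x = l)) := by decide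

lemma fin4_compl₃ : ∀ i j k l x : Fin 4, ({i, j, k, l} : Finset (Fin 4)) = Finset.univ →
    (x ≠ k ↔ (x = l ∨ x = i ∨ x = j)) := by decide

lemma fin4_compl₄ : ∀ i j k l x : Fin 4, ({i, j, k, l} : Finset (Fin 4)) = Finset.univ →
    (x ≠ l ↔ (x = k ∨ x = i ∨ x = j)) := by decide

lemma segCross_symm_left {p q r s : Pt} (h : SegCross p q r s) : SegCross q p r s := by
  obtain ⟨x, h1, h2⟩ := h
  exact ⟨x, by rwa [openSegment_symm], h2⟩

lemma segCross_comm {p q r s : Pt} (h : SegCross p q r s) : SegCross r s p q := by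
  obtain ⟨x, h1, h2⟩ := h
  exact ⟨x, h2, h1⟩

/-- If segments `pq` and `rs` cross and `q`, `r`, `s` are not collinear, then `p` is not in
the convex hull of the other three endpoints. -/
lemma notMem_hull_of_segCross {p q r s : Pt} (h : SegCross p q r s)
    (hcol : ¬ Collinear ℝ ({q, r, s} : Set Pt)) : p ∉ convexHull ℝ ({q, r, s} : Set Pt) := by
  intro hp
  obtain ⟨x, hx1, hx2⟩ := h
  obtain ⟨a, b, ha, hb, hab, hx⟩ := hx1
  obtain ⟨c, d, hc, hd, hcd, hy⟩ := hx2
  rw [show ({q, r, s} : Set Pt) = insert q {r, s} from rfl,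
    convexHull_insert ⟨r, by simp⟩, mem_convexJoin] at hp
  simp only [convexHull_pair, Set.mem_singleton_iff] at hp
  obtain ⟨q', rfl, z, hz, hpz⟩ := hp
  obtain ⟨e, g, he, hg, heg, h3⟩ := hz
  obtain ⟨al, be, hal, hbe, halbe, h2⟩ := hpz
  have hAI : AffineIndependent ℝ ![q', r, s] := affineIndependent_iff_not_collinear_set.2 hcol
  have h1 : a • p + b • q' = c • r + d • s := hx.trans hy.symm
  have key := affineIndependent_iff.1 hAI Finset.univ ![a * al + b, a * be * e - c, a * be * g - d]
    (by simp [Fin.sum_univ_three]; linear_combination a * halbe + a * be * heg + hab - hcd)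
    (by
      simp only [Fin.sum_univ_three, Matrix.cons_val_zero, Matrix.cons_val_one, Matrix.head_cons,
        Matrix.cons_val_two, Matrix.tail_cons]
      linear_combination (norm := module) h1 + a • h2 + (a * be) • h3)
    0 (Finset.mem_univ 0)
  simp at key
  nlinarith

lemma not_affineIndependent_fin4 (q : Fin 4 → Pt) : ¬ AffineIndependent ℝ q := by
  intro h
  have h1 := h.card_le_finrank_succ
  have h2 : Module.finrank ℝ (vectorSpan ℝ (Set.range q)) ≤ Module.finrank ℝ Pt :=
    Submodule.finrank_le _
  have h3 : Module.finrank ℝ Pt = 2 := by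
    simp [Module.finrank_prod]
  simp [Fintype.card_fin] at h1
  omega

lemma card_le_three_of_ai (T : Finset Pt) (hT : AffineIndependent ℝ ((↑) : T → Pt)) :
    T.card ≤ 3 := by
  have h1 := hT.card_le_finrank_succ
  have h2 : Module.finrank ℝ (vectorSpan ℝ (Set.range ((↑) : T → Pt))) ≤ Module.finrank ℝ Pt :=
    Submodule.finrank_le _
  have h3 : Module.finrank ℝ Pt = 2 := by simp [Module.finrank_prod]
  simp only [Fintype.card_coe] at h1
  omega

open Finset in
lemma single_pos_mem_hull (q : Fin 4 → Pt) (w : Fin 4 → ℝ)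
    (hsum : ∑ i, w i = 0) (hcomb : ∑ i, w i • q i = 0)
    (i : Fin 4) (hi : 0 < w i) (hone : ∀ j, j ≠ i → w j ≤ 0) :
    q i ∈ convexHull ℝ (q '' ({i}ᶜ : Set (Fin 4))) := by
  classical
  set N : Finset (Fin 4) := Finset.univ.filter (fun j => w j < 0) with hN
  have hmemN : ∀ j, j ∈ N ↔ w j < 0 := by intro j; simp [hN]
  have himem : i ∈ Finset.univ.filter (fun j => ¬ w j < 0) := by
    simp only [Finset.mem_filter, Finset.mem_univ, true_and]
    exact not_lt.2 hi.le
  have hWsum : ∑ j ∈ N, (-w j) = w i := by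
    have h1 := Finset.sum_filter_add_sum_filter_not Finset.univ (fun j => w j < 0) w
    have h2 : ∑ j ∈ Finset.univ.filter (fun j => ¬ w j < 0), w j = w i := by
      apply Finset.sum_eq_single_of_mem i himem
      intro b hb hbi
      have hb1 := hone b hbi
      have hb2 : ¬ w b < 0 := (Finset.mem_filter.1 hb).2
      linarith
    have h0 : ∑ j ∈ Finset.univ, w j = 0 := hsum
    rw [h2, h0] at h1
    rw [Finset.sum_neg_distrib]
    linarith
  have hQsum : ∑ j ∈ N, (-w j) • q j = w i • q i := by
    have h1 := Finset.sum_filter_add_sum_filter_not Finset.univ (fun j => w j < 0)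
      (fun j => w j • q j)
    have h2 : ∑ j ∈ Finset.univ.filter (fun j => ¬ w j < 0), w j • q j = w i • q i := by
      apply Finset.sum_eq_single_of_mem i himem
      intro b hb hbi
      have hb1 := hone b hbi
      have hb2 : ¬ w b < 0 := (Finset.mem_filter.1 hb).2
      have : w b = 0 := le_antisymm hb1 (not_lt.1 hb2)
      simp [this]
    have h0 : ∑ j ∈ Finset.univ, w j • q j = 0 := hcomb
    rw [h2, h0] at h1
    have : ∑ j ∈ N, w j • q j = - (w i • q i) := by
      rw [hN]; linear_combination (norm := module) h1
    simp only [neg_smul, Finset.sum_neg_distrib, this, neg_neg]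
  have hmem : N.centerMass (fun j => -w j) q ∈ convexHull ℝ (q '' ({i}ᶜ : Set (Fin 4))) := by
    apply Finset.centerMass_mem_convexHull
    · intro j hj; have := (hmemN j).1 hj; linarith
    · rw [hWsum]; exact hi
    · intro j hj
      refine ⟨j, ?_, rfl⟩
      have := (hmemN j).1 hj
      simp only [Set.mem_compl_iff, Set.mem_singleton_iff]
      rintro rfl; linarith
  rw [Finset.centerMass, hWsum, hQsum, smul_smul, inv_mul_cancel₀ hi.ne', one_smul] at hmem
  exact hmem

/-- Four points of the plane, each outside the convex hull of the other three, admit a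
pair of crossing "diagonal" segments. -/
lemma exists_cross (q : Fin 4 → Pt)
    (hconv : ∀ i : Fin 4, q i ∉ convexHull ℝ (q '' ({i}ᶜ : Set (Fin 4)))) :
    ∃ i j k l : Fin 4, ({i, j, k, l} : Finset (Fin 4)) = Finset.univ ∧
      SegCross (q i) (q j) (q k) (q l) := by
  classical
  have hdep : ¬ AffineIndependent ℝ q := not_affineIndependent_fin4 q
  rw [affineIndependent_iff] at hdep
  push_neg at hdep
  obtain ⟨s, w0, hsum0, hcomb0, e, he, hwe⟩ := hdep
  set w : Fin 4 → ℝ := fun i => if i ∈ s then w0 i else 0 with hw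
  have hsum : ∑ i, w i = 0 := by
    rw [hw]; simp only [Finset.sum_ite_mem, Finset.univ_inter]; exact hsum0
  have hcomb : ∑ i, w i • q i = 0 := by
    rw [hw]
    simp only [ite_smul, zero_smul, Finset.sum_ite_mem, Finset.univ_inter]
    exact hcomb0
  have hex : w e ≠ 0 := by rw [hw]; simpa [he] using hwe
  have hpos : ∃ i, 0 < w i := by
    by_contra hcon
    push_neg at hcon
    have h1 : w e < 0 := lt_of_le_of_ne (hcon e) hex
    have h2 : ∑ i, w i < ∑ i : Fin 4, (0 : ℝ) :=
      Finset.sum_lt_sum (fun i _ => hcon i) ⟨e, Finset.mem_univ e, h1⟩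
    simp [hsum] at h2
  have hneg : ∃ i, w i < 0 := by
    by_contra hcon
    push_neg at hcon
    obtain ⟨ip, hip⟩ := hpos
    have h2 : ∑ i : Fin 4, (0 : ℝ) < ∑ i, w i :=
      Finset.sum_lt_sum (fun i _ => hcon i) ⟨ip, Finset.mem_univ ip, hip⟩
    simp [hsum] at h2
  obtain ⟨ip, hip⟩ := hpos
  obtain ⟨iq, hiq⟩ := hneg
  by_cases hP1 : ∀ j, j ≠ ip → w j ≤ 0
  · exact absurd (single_pos_mem_hull q w hsum hcomb ip hip hP1) (hconv ip)
  by_cases hN1 : ∀ j, j ≠ iq → 0 ≤ w j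
  · refine absurd (single_pos_mem_hull q (fun i => -w i) ?_ ?_ iq
      (by simpa using neg_pos.2 hiq) ?_) (hconv iq)
    · simp [hsum]
    · simp only [neg_smul, Finset.sum_neg_distrib, hcomb, neg_zero]
    · intro j hj; simpa using hN1 j hj
  push_neg at hP1 hN1
  obtain ⟨jp, hjp1, hjp2⟩ := hP1
  obtain ⟨jq, hjq1, hjq2⟩ := hN1
  have d12 : ip ≠ jp := fun h => hjp1 h.symm
  have d34 : iq ≠ jq := fun h => hjq1 h.symm
  have d13 : ip ≠ iq := by rintro rfl; linarith
  have d14 : ip ≠ jq := by rintro rfl; linarith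
  have d23 : jp ≠ iq := by rintro rfl; linarith
  have d24 : jp ≠ jq := by rintro rfl; linarith
  have huniv : ({ip, jp, iq, jq} : Finset (Fin 4)) = Finset.univ := by
    apply Finset.eq_univ_of_card
    rw [Finset.card_insert_of_notMem (by simp [d12, d13, d14]),
      Finset.card_insert_of_notMem (by simp [d23, d24]),
      Finset.card_insert_of_notMem (by simp [d34]), Finset.card_singleton]
    rfl
  have hsum4 : w ip + w jp + w iq + w jq = 0 := by
    have := hsum
    rw [show (Finset.univ : Finset (Fin 4)) = {ip, jp, iq, jq} from huniv.symm] at this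
    rw [Finset.sum_insert (by simp [d12, d13, d14]),
      Finset.sum_insert (by simp [d23, d24]),
      Finset.sum_insert (by simp [d34]), Finset.sum_singleton] at this
    linarith
  have hcomb4 : w ip • q ip + w jp • q jp + w iq • q iq + w jq • q jq = 0 := by
    have := hcomb
    rw [show (Finset.univ : Finset (Fin 4)) = {ip, jp, iq, jq} from huniv.symm] at this
    rw [Finset.sum_insert (by simp [d12, d13, d14]),
      Finset.sum_insert (by simp [d23, d24]),
      Finset.sum_insert (by simp [d34]), Finset.sum_singleton] at this
    linear_combination (norm := module) this
  set W : ℝ := w ip + w jp with hWdef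
  have hW : 0 < W := by positivity
  refine ⟨ip, jp, iq, jq, huniv, ⟨W⁻¹ • (w ip • q ip + w jp • q jp), ?_, ?_⟩⟩
  · refine ⟨W⁻¹ * w ip, W⁻¹ * w jp, mul_pos (inv_pos.2 hW) hip, mul_pos (inv_pos.2 hW) hjp2,
      ?_, ?_⟩
    · rw [← mul_add, ← hWdef, inv_mul_cancel₀ hW.ne']
    · rw [smul_add, mul_smul, mul_smul]
  · refine ⟨W⁻¹ * (-w iq), W⁻¹ * (-w jq), mul_pos (inv_pos.2 hW) (neg_pos.2 hiq),
      mul_pos (inv_pos.2 hW) (neg_pos.2 hjq2), ?_, ?_⟩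
    · have : -w iq + -w jq = W := by rw [hWdef]; linarith
      rw [← mul_add, this, inv_mul_cancel₀ hW.ne']
    · rw [mul_smul, mul_smul, ← smul_add]
      congr 1
      linear_combination (norm := module) -hcomb4

/-- If some pairing of four points (in general position) has crossing segments, then each of
them lies outside the convex hull of the other three. -/
lemma notMem_hull_of_cross_indexed (q : Fin 4 → Pt)
    (hcol3 : ∀ m n o : Fin 4, m ≠ n → n ≠ o → m ≠ o → ¬ Collinear ℝ ({q m, q n, q o} : Set Pt))
    {i j k l : Fin 4} (huniv : ({i, j, k, l} : Finset (Fin 4)) = Finset.univ)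
    (hc : SegCross (q i) (q j) (q k) (q l)) :
    ∀ m : Fin 4, q m ∉ convexHull ℝ (q '' ({m}ᶜ : Set (Fin 4))) := by
  intro m
  obtain ⟨d12, d13, d14, d23, d24, d34⟩ := fin4_distinct i j k l huniv
  have key : ∀ a b c : Fin 4, (∀ x : Fin 4, x ≠ m ↔ (x = a ∨ x = b ∨ x = c)) →
      q m ∉ convexHull ℝ ({q a, q b, q c} : Set Pt) →
      q m ∉ convexHull ℝ (q '' ({m}ᶜ : Set (Fin 4))) := by
    intro a b c hmem hnot
    have : (({m}ᶜ : Set (Fin 4))) = {a, b, c} := by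
      ext x
      simpa [Set.mem_compl_iff] using hmem x
    rw [this, Set.image_insert_eq, Set.image_insert_eq, Set.image_singleton]
    exact hnot
  rcases fin4_mem i j k l m huniv with hm | hm | hm | hm <;> subst hm
  · exact key j k l (fun x => fin4_compl₁ m j k l x huniv)
      (notMem_hull_of_segCross hc (hcol3 j k l d23 d34 d24))
  · exact key i k l (fun x => fin4_compl₂ i m k l x huniv)
      (notMem_hull_of_segCross (segCross_symm_left hc) (hcol3 i k l d13 d34 d14))
  · exact key l i j (fun x => fin4_compl₃ i j m l x huniv)
      (notMem_hull_of_segCross (segCross_comm hc)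
        (hcol3 l i j (Ne.symm d14) d12 (Ne.symm d24)))
  · exact key k i j (fun x => fin4_compl₄ i j k m x huniv)
      (notMem_hull_of_segCross (segCross_symm_left (segCross_comm hc))
        (hcol3 k i j (Ne.symm d13) d12 (Ne.symm d23)))

/-- Carathéodory-style reduction: a family of points in general position is convex
independent as soon as no point is in the convex hull of three others. -/
lemma convexIndependent_of_forall_quad {ι : Type*} (p : ι → Pt)
    (hinj : Function.Injective p)
    (hcol : ∀ a b c : ι, a ≠ b → b ≠ c → a ≠ c → ¬ Collinear ℝ ({p a, p b, p c} : Set Pt))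
    (h4 : ∀ a b c d : ι, a ≠ b → a ≠ c → a ≠ d → b ≠ c → b ≠ d → c ≠ d →
      p a ∉ convexHull ℝ ({p b, p c, p d} : Set Pt)) :
    ConvexIndependent ℝ p := by
  classical
  intro σ x hx
  by_contra hxσ
  rw [convexHull_eq_union] at hx
  simp only [Set.mem_iUnion, exists_prop] at hx
  obtain ⟨T, hTsub, hTai, hxT⟩ := hx
  have hT3 : T.card ≤ 3 := card_le_three_of_ai T hTai
  have hTc : T.card = 0 ∨ T.card = 1 ∨ T.card = 2 ∨ T.card = 3 := by omega
  have hpre : ∀ y ∈ T, ∃ b ∈ σ, p b = y := by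
    intro y hy
    obtain ⟨b, hb, hpb⟩ := hTsub hy
    exact ⟨b, hb, hpb⟩
  rcases hTc with h0 | h1 | h2 | h3
  · rw [Finset.card_eq_zero.1 h0] at hxT
    simp at hxT
  · obtain ⟨y, hy⟩ := Finset.card_eq_one.1 h1
    subst hy
    simp only [Finset.coe_singleton, convexHull_singleton, Set.mem_singleton_iff] at hxT
    obtain ⟨b, hb, hpb⟩ := hpre y (Finset.mem_singleton_self y)
    exact hxσ (hinj (hxT.trans hpb.symm) ▸ hb)
  · obtain ⟨y, z, hyz, hT⟩ := Finset.card_eq_two.1 h2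
    subst hT
    obtain ⟨b, hb, rfl⟩ := hpre y (by simp)
    obtain ⟨c, hc, rfl⟩ := hpre z (by simp)
    have hbc : b ≠ c := fun h => hyz (by rw [h])
    have hxb : x ≠ b := fun h => hxσ (h ▸ hb)
    have hxc : x ≠ c := fun h => hxσ (h ▸ hc)
    apply hcol x b c hxb hbc hxc
    have hx' : p x ∈ affineSpan ℝ ({p b, p c} : Set Pt) := by
      apply convexHull_subset_affineSpan
      simpa using hxT
    rw [show ({p x, p b, p c} : Set Pt) = insert (p x) {p b, p c} from rfl,
      collinear_insert_iff_of_mem_affineSpan hx']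
    exact collinear_pair ℝ _ _
  · obtain ⟨y, z, u, hyz, hyu, hzu, hT⟩ := Finset.card_eq_three.1 h3
    subst hT
    obtain ⟨b, hb, rfl⟩ := hpre y (by simp)
    obtain ⟨c, hc, rfl⟩ := hpre z (by simp)
    obtain ⟨d, hd, rfl⟩ := hpre u (by simp)
    have hbc : b ≠ c := fun h => hyz (by rw [h])
    have hbd : b ≠ d := fun h => hyu (by rw [h])
    have hcd : c ≠ d := fun h => hzu (by rw [h])
    have hxb : x ≠ b := fun h => hxσ (h ▸ hb)
    have hxc : x ≠ c := fun h => hxσ (h ▸ hc)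
    have hxd : x ≠ d := fun h => hxσ (h ▸ hd)
    apply h4 x b c d hxb hxc hxd hbc hbd hcd
    simpa using hxT

lemma hull_quad {ι : Type*} (p : ι → Pt) (hCI : ConvexIndependent ℝ p)
    (v : Fin 4 → ι) (hv : Function.Injective v) :
    ∀ i : Fin 4, p (v i) ∉ convexHull ℝ ((fun m => p (v m)) '' ({i}ᶜ : Set (Fin 4))) := by
  intro i hmem
  have hCI' : ConvexIndependent ℝ (fun m => p (v m)) := hCI.comp_embedding ⟨v, hv⟩
  have := hCI' ({i}ᶜ : Set (Fin 4)) i hmem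
  simp at this

end AuxiliaryLemmas

/-- An injective geometric homomorphism does not decrease the convex clique
number. -/
theorem convexCliqueNum_le_of_geomHom [Finite V] [DecidableEq V]
    (R S : GeomRealization G) (f : GeomHom R S) :
    R.convexCliqueNum ≤ S.convexCliqueNum := by
  classical
  have := Fintype.ofFinite V
  unfold GeomRealization.convexCliqueNum
  apply csSup_le_csSup
  · exact ⟨Fintype.card V, fun c ⟨t, ht, _⟩ => ht ▸ (Finset.card_le_univ t).trans_eq
      Finset.card_univ⟩
  · refine ⟨0, ∅, rfl, by simp, ?_⟩
    haveI : IsEmpty {y // y ∈ (∅ : Finset V)} := by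
      constructor; rintro ⟨y, hy⟩; simp at hy
    exact Subsingleton.convexIndependent (𝕜 := ℝ)
      (fun x : {y // y ∈ (∅ : Finset V)} => R.pos x.1)
  · rintro c ⟨t, hcard, hadj, hci⟩
    set F := f.toFun with hF
    refine ⟨t.image F, by rw [Finset.card_image_of_injective t f.inj, hcard], ?_, ?_⟩
    · rintro u hu w hw huw
      obtain ⟨a, ha, rfl⟩ := Finset.mem_image.1 hu
      obtain ⟨b, hb, rfl⟩ := Finset.mem_image.1 hw
      have hab : a ≠ b := fun h => huw (by rw [h])
      exact f.adj a b (hadj a ha b hb hab)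
    · apply convexIndependent_of_forall_quad
      · intro x y hxy
        exact Subtype.ext (S.genpos.1 hxy)
      · intro a b c hab hbc hac
        exact S.genpos.2 _ _ _ (Subtype.coe_injective.ne_iff.2 hab)
          (Subtype.coe_injective.ne_iff.2 hbc) (Subtype.coe_injective.ne_iff.2 hac)
      · intro a b c d hab hac had hbc hbd hcd
        obtain ⟨a₀, ha₀, ha₀e⟩ := Finset.mem_image.1 a.2
        obtain ⟨b₀, hb₀, hb₀e⟩ := Finset.mem_image.1 b.2
        obtain ⟨c₀, hc₀, hc₀e⟩ := Finset.mem_image.1 c.2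
        obtain ⟨d₀, hd₀, hd₀e⟩ := Finset.mem_image.1 d.2
        have hv : ∀ (x y : {u // u ∈ t.image F}) (x₀ y₀ : V), F x₀ = ↑x → F y₀ = ↑y →
            x ≠ y → x₀ ≠ y₀ := by
          rintro x y x₀ y₀ hx hy hxy rfl
          exact hxy (Subtype.ext (hx ▸ hy))
        have dab := hv a b a₀ b₀ ha₀e hb₀e hab
        have dac := hv a c a₀ c₀ ha₀e hc₀e hac
        have dad := hv a d a₀ d₀ ha₀e hd₀e had
        have dbc := hv b c b₀ c₀ hb₀e hc₀e hbc
        have dbd := hv b d b₀ d₀ hb₀e hd₀e hbd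
        have dcd := hv c d c₀ d₀ hc₀e hd₀e hcd
        set v : Fin 4 → V := ![a₀, b₀, c₀, d₀] with hvdef
        have hvt : ∀ m, v m ∈ t := vec4_mem ha₀ hb₀ hc₀ hd₀
        have hvinj : Function.Injective v :=
          vec4_injective dab dac dad dbc dbd dcd
        set v' : Fin 4 → {y // y ∈ t} := fun m => ⟨v m, hvt m⟩ with hv'def
        have hv'inj : Function.Injective v' := fun m n h =>
          hvinj (congrArg Subtype.val h)
        have hconv := hull_quad (fun x : {y // y ∈ t} => R.pos x.1) hci v' hv'inj
        obtain ⟨i, j, k, l, huniv, hcr⟩ := exists_cross (fun m => R.pos (v m)) hconv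
        obtain ⟨d12, d13, d14, d23, d24, d34⟩ := fin4_distinct i j k l huniv
        have hadj4 : ∀ m n : Fin 4, m ≠ n → G.Adj (v m) (v n) := by
          intro m n hmn
          exact hadj _ (hvt m) _ (hvt n) (fun h => hmn (hvinj h))
        have hcrS := f.cross (v i) (v j) (v k) (v l) (hadj4 i j d12) (hadj4 k l d34) hcr
        have hFinj : Function.Injective (fun m => F (v m)) := fun m n h =>
          hvinj (f.inj h)
        have hnot := notMem_hull_of_cross_indexed (fun m => S.pos (F (v m)))
          (fun m n o hmn hno hmo => S.genpos.2 _ _ _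
            (fun h => hmn (hFinj h)) (fun h => hno (hFinj h)) (fun h => hmo (hFinj h)))
          huniv hcrS 0
        have himg : ((fun m => S.pos (F (v m))) '' ({0}ᶜ : Set (Fin 4))) =
            ({S.pos ↑b, S.pos ↑c, S.pos ↑d} : Set Pt) := by
          have h0c : ({0}ᶜ : Set (Fin 4)) = {1, 2, 3} := by
            ext x
            simp only [Set.mem_compl_iff, Set.mem_singleton_iff, Set.mem_insert_iff]
            omega
          rw [h0c, Set.image_insert_eq, Set.image_insert_eq, Set.image_singleton]
          show ({S.pos (F b₀), S.pos (F c₀), S.pos (F d₀)} : Set Pt) = _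
          rw [hb₀e, hc₀e, hd₀e]
        rw [himg] at hnot
        have : S.pos ↑a = S.pos (F (v 0)) := by
          show _ = S.pos (F a₀); rw [ha₀e]
        rw [this]
        exact hnot
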